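/- arXiv:2110.03038 — 2 statements merged into one kernel-verified Lean document; each statement's English description precedes it below -/
import Mathlib

section
/- (a) For every odd n ≥ 3 one has ∫ x S_{n−2}(x) dμ(x) ≠ 0, and for every even n ≥ 4 one has ∫ x² S_{n−2}(x) dμ(x) ≠ 0; hence ρ_n is well defined. (b) For every n ≥ 1 the monic polynomial 𝒫_n(x) := S_n(x) + ρ_n S_{n−2}(x) satisfies ∫ 𝒫_n(x) dμ(x) = 0; for n ≥ 2 also ∫ x 𝒫_n(x) dμ(x) = 0; for n ≥ 3 also ∫ x² 𝒫_n(x) dμ(x) = 0; and ∫ 𝒫_n(x) R_k(x) dμ(x) = 0 for every k with 1 ≤ k ≤ n − 3. -/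
open MeasureTheory Polynomial

/-- Evaluation of a real polynomial at a complex point. -/
noncomputable def evC (p : Polynomial ℝ) (z : ℂ) : ℂ :=
  (p.map (algebraMap ℝ ℂ)).eval z

/-- Evaluation of the derivative of a real polynomial at a complex point. -/
noncomputable def devC (p : Polynomial ℝ) (z : ℂ) : ℂ :=
  (Polynomial.derivative (p.map (algebraMap ℝ ℂ))).eval z

/-- The (topological) support of a measure on ℝ: points all of whose
neighborhoods have nonzero measure. -/
def measSupport (μ : Measure ℝ) : Set ℝ := {x | ∀ U ∈ nhds x, μ U ≠ 0}

/-- c_n = R_n(i) R_{n+1}(-i) - R_{n+1}(i) R_n(-i). -/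
noncomputable def cconst (R : ℕ → Polynomial ℝ) (n : ℕ) : ℂ :=
  evC (R n) Complex.I * evC (R (n+1)) (-Complex.I)
    - evC (R (n+1)) Complex.I * evC (R n) (-Complex.I)

/-- The 3×3 determinant polynomial D_n(x) ∈ ℂ[x], whose first two rows are the
values of R_n, R_{n+1}, R_{n+2} at i and -i and whose last row consists of the
polynomials themselves. -/
noncomputable def Dpoly (R : ℕ → Polynomial ℝ) (n : ℕ) : Polynomial ℂ :=
  Matrix.det
    !![Polynomial.C (evC (R n) Complex.I), Polynomial.C (evC (R (n+1)) Complex.I),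
         Polynomial.C (evC (R (n+2)) Complex.I);
       Polynomial.C (evC (R n) (-Complex.I)), Polynomial.C (evC (R (n+1)) (-Complex.I)),
         Polynomial.C (evC (R (n+2)) (-Complex.I));
       (R n).map (algebraMap ℝ ℂ), (R (n+1)).map (algebraMap ℝ ℂ),
         (R (n+2)).map (algebraMap ℝ ℂ)]

/-- The coefficients ρ_n: ρ_n = 0 for n ≤ 2, and for n ≥ 3,
ρ_n = -(∫ x S_n dμ)/(∫ x S_{n-2} dμ) for odd n and
ρ_n = -(∫ x² S_n dμ)/(∫ x² S_{n-2} dμ) for even n. -/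
noncomputable def rho (μ : Measure ℝ) (S : ℕ → Polynomial ℝ) (n : ℕ) : ℝ :=
  if n ≤ 2 then 0
  else if Odd n then
    -(∫ x, x * (S n).eval x ∂μ) / (∫ x, x * (S (n-2)).eval x ∂μ)
  else
    -(∫ x, x^2 * (S n).eval x ∂μ) / (∫ x, x^2 * (S (n-2)).eval x ∂μ)

/-!
Expanding `D_n` along its last row, the parity of the `R_k` kills the coefficient of `R_{n+1}`,
and the two remaining coefficients are purely imaginary, so `(1 + x²)² S_n = g_n R_n + R_{n+2}`
with `g_n` real. Hence `S_n` has degree `n` and parity `(-1)ⁿ`, and integrating `S_n p` against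
`μ` is integrating `(g_n R_n + R_{n+2}) p` against `(1 + x²)⁻² μ`.

Since `R_k'(i) = 0`, every `R_k` with `k ≥ 2` is `(1 + x²)² q + a R_1 + b` with `deg q = k - 2`;
with (ii), (iii) and the orthogonality of the `P_n` this makes `R_1, R_2, …` orthogonal for
`(1 + x²)⁻² μ`. So `S_n` is `μ`-orthogonal to `1, R_1, …, R_{n-1}`, and by symmetry to `x` or `x²`
according to the parity of `n`. Together with `x` and `x²` these polynomials span all polynomials
of degree `≤ n + 1`, so if the remaining moment of `S_n` vanished too, `S_n` would be orthogonal
to itself, which is impossible for a measure with infinite support. This is (a), and `ρ_n` is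
chosen to cancel that remaining moment in (b).
-/

open ComplexConjugate

def HasParity (p : ℝ[X]) (n : ℕ) : Prop := ∀ x, p.eval (-x) = (-1) ^ n * p.eval x

namespace HasParity

variable {p q : ℝ[X]} {m n : ℕ}

lemma mul (hp : HasParity p m) (hq : HasParity q n) : HasParity (p * q) (m + n) :=
  fun x => by simp only [eval_mul, hp x, hq x, pow_add]; ring

lemma add (hp : HasParity p n) (hq : HasParity q n) : HasParity (p + q) n :=
  fun x => by simp only [eval_add, hp x, hq x]; ring

lemma C_mul (hp : HasParity p n) (a : ℝ) : HasParity (C a * p) n :=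
  fun x => by simp only [eval_mul, eval_C, hp x]; ring

lemma of_one_add_X_sq_sq_mul (h : HasParity ((1 + X ^ 2) ^ 2 * p) n) : HasParity p n := fun x => by
  have := h x
  simp only [eval_mul, eval_pow, eval_add, eval_one, eval_X, neg_sq] at this
  exact mul_left_cancel₀ (by positivity) (this.trans (by ring))

lemma evC_neg (hp : HasParity p n) (z : ℂ) : evC p (-z) = (-1) ^ n * evC p z := by
  have hcomp : p.comp (-X) = C ((-1) ^ n) * p := Polynomial.funext fun x => by simp [hp x]
  simpa [evC, map_comp, eval_comp] using congrArg (fun r => (r.map (algebraMap ℝ ℂ)).eval z) hcomp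

end HasParity

lemma hasParity_X_pow (n : ℕ) : HasParity (X ^ n) n := fun x => by
  simp only [eval_pow, eval_X]
  exact neg_pow x n

lemma hasParity_X : HasParity X 1 := by simpa using hasParity_X_pow 1

lemma hasParity_add_two {p : ℝ[X]} {n : ℕ} : HasParity p (n + 2) ↔ HasParity p n := by
  simp [HasParity, pow_add]

lemma evC_conj (p : ℝ[X]) (z : ℂ) : conj (evC p z) = evC p (conj z) := by
  rw [evC, evC, eval_map, eval_map, hom_eval₂]
  congr 1
  ext r
  simp

lemma monic_one_add_X_sq_sq : ((1 + X ^ 2 : ℝ[X]) ^ 2).Monic := by monicity!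

lemma natDegree_one_add_X_sq_sq : ((1 + X ^ 2 : ℝ[X]) ^ 2).natDegree = 4 := by compute_degree!

lemma devC_one_add_X_sq_sq_mul (q : ℝ[X]) : devC ((1 + X ^ 2) ^ 2 * q) Complex.I = 0 := by
  simp [devC, derivative_mul, derivative_pow, Complex.I_sq]

lemma eq_of_natDegree_le_three_of_devC_eq_zero {r : ℝ[X]} (hdeg : r.natDegree ≤ 3)
    (hd : devC r Complex.I = 0) : r = C (r.coeff 3) * (X ^ 3 + C 3 * X) + C (r.coeff 0) := by
  have hr : r = C (r.coeff 0) + C (r.coeff 1) * X + C (r.coeff 2) * X ^ 2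
      + C (r.coeff 3) * X ^ 3 := by
    conv_lhs => rw [r.as_sum_range' 4 (by omega)]
    simp [Finset.sum_range_succ, ← C_mul_X_pow_eq_monomial]
  rw [hr] at hd
  have hd' : ((r.coeff 1 - 3 * r.coeff 3 : ℝ) : ℂ) + (2 * r.coeff 2 : ℝ) * Complex.I = 0 := by
    simp [devC, derivative_mul] at hd
    push_cast
    linear_combination hd
  obtain ⟨h1, h2⟩ := Complex.ext_iff.mp hd'
  simp only [Complex.add_re, Complex.ofReal_re, Complex.re_ofReal_mul, Complex.I_re, Complex.add_im,
    Complex.ofReal_im, Complex.im_ofReal_mul, Complex.I_im, Complex.zero_re, Complex.zero_im,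
    mul_zero, mul_one, add_zero, zero_add] at h1 h2
  nth_rewrite 1 [hr]
  rw [show r.coeff 2 = 0 by linarith, show r.coeff 1 = 3 * r.coeff 3 by linarith]
  simp only [map_mul, map_zero]
  ring

lemma exists_eq_one_add_X_sq_sq_mul_add {p : ℝ[X]} (hd : devC p Complex.I = 0) :
    ∃ (q : ℝ[X]) (a b : ℝ), p = (1 + X ^ 2) ^ 2 * q + C a * (X ^ 3 + C 3 * X) + C b ∧
      q.natDegree = p.natDegree - 4 := by
  set q := p /ₘ (1 + X ^ 2) ^ 2
  set r := p %ₘ (1 + X ^ 2) ^ 2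
  have hdiv : r + (1 + X ^ 2) ^ 2 * q = p := modByMonic_add_div p _
  have hrdeg : r.natDegree ≤ 3 := by
    have := natDegree_modByMonic_lt p monic_one_add_X_sq_sq
      fun h => by simpa [h] using natDegree_one_add_X_sq_sq
    rw [natDegree_one_add_X_sq_sq] at this
    exact Nat.le_of_lt_succ this
  have hrd : devC r Complex.I = 0 := by
    have hq := devC_one_add_X_sq_sq_mul q
    simp only [devC, eq_sub_of_add_eq hdiv, Polynomial.map_sub, derivative_sub, eval_sub] at hd hq ⊢
    rw [hd, hq, sub_zero]
  refine ⟨q, r.coeff 3, r.coeff 0, ?_, ?_⟩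
  · conv_lhs => rw [← hdiv, eq_of_natDegree_le_three_of_devC_eq_zero hrdeg hrd]
    ring
  · rw [natDegree_divByMonic p monic_one_add_X_sq_sq, natDegree_one_add_X_sq_sq]

lemma eq_X_pow_three_add_C_three_mul_X {p : ℝ[X]} (hpar : HasParity p 1) (hmon : p.Monic)
    (hdeg : p.natDegree = 3) (hd : devC p Complex.I = 0) : p = X ^ 3 + C 3 * X := by
  have h3 : p.coeff 3 = 1 := hdeg ▸ hmon.coeff_natDegree
  have h0 : p.coeff 0 = 0 := by
    have := hpar 0
    rw [coeff_zero_eq_eval_zero]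
    simp only [neg_zero, pow_one, neg_one_mul] at this
    linarith
  rw [eq_of_natDegree_le_three_of_devC_eq_zero hdeg.le hd, h3, h0]
  simp

lemma Dpoly_eq (R : ℕ → ℝ[X]) (n : ℕ) :
    Dpoly R n =
      C (evC (R (n + 1)) Complex.I * evC (R (n + 2)) (-Complex.I)
          - evC (R (n + 2)) Complex.I * evC (R (n + 1)) (-Complex.I)) * (R n).map (algebraMap ℝ ℂ)
      + C (evC (R (n + 2)) Complex.I * evC (R n) (-Complex.I)
          - evC (R n) Complex.I * evC (R (n + 2)) (-Complex.I)) * (R (n + 1)).map (algebraMap ℝ ℂ)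
      + C (cconst R n) * (R (n + 2)).map (algebraMap ℝ ℂ) := by
  simp only [Dpoly, Matrix.det_fin_three, cconst, Matrix.of_apply, Matrix.cons_val',
    Matrix.cons_val_zero, Matrix.cons_val_one, Matrix.cons_val_two, Matrix.empty_val',
    Matrix.cons_val_fin_one, Matrix.head_cons, Matrix.tail_cons, Matrix.head_fin_const, map_sub,
    map_mul]
  ring

lemma exists_one_add_X_sq_sq_mul_eq {R S : ℕ → ℝ[X]} {n : ℕ} (hc : cconst R n ≠ 0)
    (hS : C (cconst R n) * (1 + X ^ 2) ^ 2 * (S n).map (algebraMap ℝ ℂ) = Dpoly R n)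
    (h₀ : HasParity (R n) n) (h₂ : HasParity (R (n + 2)) (n + 2)) :
    ∃ g : ℝ, (1 + X ^ 2) ^ 2 * S n = C g * R n + R (n + 2) := by
  have hconj : ∀ k, evC (R k) (-Complex.I) = conj (evC (R k) Complex.I) := fun k => by
    rw [evC_conj, Complex.conj_I]
  have hmid : evC (R (n + 2)) Complex.I * evC (R n) (-Complex.I)
      - evC (R n) Complex.I * evC (R (n + 2)) (-Complex.I) = 0 := by
    rw [h₀.evC_neg, h₂.evC_neg, pow_add]
    ring
  -- `u * conj v - v * conj u` is purely imaginary, so the ratio of two such numbers is real.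
  have hanti : ∀ u v : ℂ, conj (u * conj v - v * conj u) = -(u * conj v - v * conj u) := by
    intro u v
    simp only [map_sub, map_mul, Complex.conj_conj]
    ring
  set α := evC (R (n + 1)) Complex.I * evC (R (n + 2)) (-Complex.I)
    - evC (R (n + 2)) Complex.I * evC (R (n + 1)) (-Complex.I) with hα_def
  have hα : conj α = -α := by rw [hα_def, hconj, hconj]; exact hanti _ _
  have hcc : conj (cconst R n) = -cconst R n := by rw [cconst, hconj, hconj]; exact hanti _ _
  have hγ : conj (α / cconst R n) = α / cconst R n := by
    rw [map_div₀, hα, hcc, neg_div_neg_eq]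
  obtain ⟨g, hg⟩ : ∃ g : ℝ, (g : ℂ) = α / cconst R n := ⟨_, Complex.conj_eq_iff_re.mp hγ⟩
  refine ⟨g, map_injective (algebraMap ℝ ℂ) (algebraMap ℝ ℂ).injective
    (mul_left_cancel₀ (C_ne_zero.mpr hc) ?_)⟩
  rw [Polynomial.map_mul, ← mul_assoc, Polynomial.map_pow, Polynomial.map_add, Polynomial.map_one,
    Polynomial.map_pow, map_X, hS, Dpoly_eq, hmid, ← hα_def]
  simp only [Polynomial.map_add, Polynomial.map_mul, map_C, Complex.coe_algebraMap, hg, map_zero,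
    zero_mul, add_zero, mul_add, ← mul_assoc, ← C_mul, mul_div_cancel₀ _ hc]

lemma Polynomial.Sequence.map_eq_zero_of_degree_lt {K M : Type*} [Field K] [AddCommGroup M]
    [Module K M] (E : Sequence K) (φ : K[X] →ₗ[K] M) {m : ℕ} (h : ∀ i < m, φ (E i) = 0)
    {q : K[X]} (hq : q.degree < m) : φ q = 0 := by
  have hspan : q ∈ Submodule.span K (E '' Set.Iio m) := by
    rw [E.span_degreeLT fun i _ => isUnit_iff_ne_zero.mpr (leadingCoeff_ne_zero.mpr (E.ne_zero i))]
    exact mem_degreeLT.mpr hq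
  refine (Submodule.span_le (p := LinearMap.ker φ)).mpr ?_ hspan
  rintro _ ⟨i, hi, rfl⟩
  exact h i hi

lemma map_P_mul_eq_zero (L : ℝ[X] →ₗ[ℝ] ℝ) {P : ℕ → ℝ[X]} (hPmonic : ∀ n, (P n).Monic)
    (hPdeg : ∀ n, (P n).natDegree = n) (hPorth : ∀ m n, m ≠ n → L (P m * P n) = 0) (j : ℕ)
    {q : ℝ[X]} (hq : q.degree < j) : L (P j * q) = 0 :=
  (Sequence.mk P fun n => by rw [degree_eq_natDegree (hPmonic n).ne_zero, hPdeg]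
    ).map_eq_zero_of_degree_lt (L ∘ₗ LinearMap.mulLeft ℝ (P j)) (fun i hi => hPorth j i hi.ne') hq

section RecurrenceFamily

variable {P R : ℕ → ℝ[X]} {A B : ℕ → ℝ}

lemma hasParity_R (hR1 : R 1 = P 3 + C (A 1) * P 1)
    (hRn : ∀ n, 2 ≤ n → R n = P (n + 2) + C (A n) * P n + C (B n) * P (n - 2))
    (hP : ∀ n, HasParity (P n) n) {n : ℕ} (hn : 1 ≤ n) : HasParity (R n) n := by
  obtain rfl | ⟨m, rfl⟩ : n = 1 ∨ ∃ m, n = m + 2 := by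
    rcases n with _ | _ | m <;> simp_all
  · rw [hR1]
    exact hasParity_add_two.mp ((hP 3).add ((hasParity_add_two.mpr (hP 1)).C_mul _))
  · rw [hRn _ (by omega), Nat.add_sub_cancel]
    exact ((hasParity_add_two.mp (hP _)).add ((hP _).C_mul _)).add
      ((hasParity_add_two.mpr (hP m)).C_mul _)

lemma exists_R_eq_P_add (hR1 : R 1 = P 3 + C (A 1) * P 1)
    (hRn : ∀ n, 2 ≤ n → R n = P (n + 2) + C (A n) * P n + C (B n) * P (n - 2))
    (hPdeg : ∀ n, (P n).natDegree = n) {n : ℕ} (hn : 1 ≤ n) :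
    ∃ Q : ℝ[X], R n = P (n + 2) + Q ∧ Q.natDegree < n + 2 := by
  obtain rfl | ⟨m, rfl⟩ : n = 1 ∨ ∃ m, n = m + 2 := by
    rcases n with _ | _ | m <;> simp_all
  · exact ⟨_, hR1, (natDegree_C_mul_le _ _).trans_lt (by simp [hPdeg])⟩
  · refine ⟨_, (hRn _ (by omega)).trans (add_assoc _ _ _),
      lt_of_le_of_lt (b := m + 2) ?_ (by omega)⟩
    refine (natDegree_add_le _ _).trans (max_le ?_ ?_) <;>
      refine (natDegree_C_mul_le _ _).trans ?_ <;> simp [hPdeg]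

lemma natDegree_R (hR1 : R 1 = P 3 + C (A 1) * P 1)
    (hRn : ∀ n, 2 ≤ n → R n = P (n + 2) + C (A n) * P n + C (B n) * P (n - 2))
    (hPdeg : ∀ n, (P n).natDegree = n) {n : ℕ} (hn : 1 ≤ n) : (R n).natDegree = n + 2 := by
  obtain ⟨Q, hR, hQ⟩ := exists_R_eq_P_add hR1 hRn hPdeg hn
  rw [hR, natDegree_add_eq_left_of_natDegree_lt (by rwa [hPdeg]), hPdeg]

lemma monic_R (hR1 : R 1 = P 3 + C (A 1) * P 1)
    (hRn : ∀ n, 2 ≤ n → R n = P (n + 2) + C (A n) * P n + C (B n) * P (n - 2))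
    (hPmonic : ∀ n, (P n).Monic) (hPdeg : ∀ n, (P n).natDegree = n) {n : ℕ} (hn : 1 ≤ n) :
    (R n).Monic := by
  obtain ⟨Q, hR, hQ⟩ := exists_R_eq_P_add hR1 hRn hPdeg hn
  rw [hR]
  exact (hPmonic _).add_of_left (degree_lt_degree (by rwa [hPdeg]))

lemma map_R_mul_eq_zero
    (hRn : ∀ n, 2 ≤ n → R n = P (n + 2) + C (A n) * P n + C (B n) * P (n - 2))
    (L : ℝ[X] →ₗ[ℝ] ℝ) (hPorth : ∀ (j : ℕ) (q : ℝ[X]), q.degree < j → L (P j * q) = 0)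
    {n : ℕ} (hn : 2 ≤ n) {q : ℝ[X]} (hq : q.degree < (n - 2 : ℕ)) : L (R n * q) = 0 := by
  have hlt : ∀ j, n - 2 ≤ j → L (P j * q) = 0 := fun j hj =>
    hPorth j q (hq.trans_le (by exact_mod_cast hj))
  simp only [hRn n hn, add_mul, C_mul', smul_mul_assoc, map_add, map_smul,
    hlt _ le_rfl, hlt n (by omega), hlt (n + 2) (by omega), smul_zero, add_zero]

end RecurrenceFamily

lemma map_R_mul_R_eq_zero {R : ℕ → ℝ[X]} (L₁ L₂ : ℝ[X] →ₗ[ℝ] ℝ)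
    (hL : ∀ p, L₂ ((1 + X ^ 2) ^ 2 * p) = L₁ p)
    (hRdeg : ∀ n, 1 ≤ n → (R n).natDegree = n + 2)
    (hR1 : R 1 = X ^ 3 + C 3 * X)
    (hRorth : ∀ n, 2 ≤ n → ∀ q : ℝ[X], q.degree < (n - 2 : ℕ) → L₁ (R n * q) = 0)
    (hRi : ∀ n, 1 ≤ n → devC (R n) Complex.I = 0)
    (hRii : ∀ n, 1 ≤ n → L₂ (R n) = 0)
    (hRiii : ∀ n, 2 ≤ n → L₂ (R 1 * R n) = 0)
    {m k : ℕ} (hk : 1 ≤ k) (hkm : k < m) : L₂ (R m * R k) = 0 := by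
  obtain rfl | hk2 := hk.eq_or_lt
  · rw [mul_comm]
    exact hRiii m hkm
  obtain ⟨q, a, b, hRk, hq⟩ := exists_eq_one_add_X_sq_sq_mul_add (hRi k hk)
  have hqdeg : q.degree < (m - 2 : ℕ) := by
    refine degree_le_natDegree.trans_lt ?_
    rw [hq, hRdeg k hk]
    exact_mod_cast (by omega : k + 2 - 4 < m - 2)
  rw [hRk, ← hR1]
  simp only [mul_add, mul_comm (R m) (C b), C_mul', mul_smul_comm, map_add, map_smul,
    mul_left_comm (R m), hL, hRorth m (by omega) q hqdeg, mul_comm (R m) (R 1),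
    hRiii m (by omega), hRii m (by omega), smul_zero, add_zero]

section DivisionByOneAddXSqSq

variable {s r₀ r₂ : ℝ[X]} {g : ℝ}

lemma map_mul_eq_of_one_add_X_sq_sq_mul_eq (h : (1 + X ^ 2) ^ 2 * s = C g * r₀ + r₂)
    (L₁ L₂ : ℝ[X] →ₗ[ℝ] ℝ) (hL : ∀ p, L₂ ((1 + X ^ 2) ^ 2 * p) = L₁ p) (p : ℝ[X]) :
    L₁ (s * p) = g * L₂ (r₀ * p) + L₂ (r₂ * p) := by
  rw [← hL, ← mul_assoc, h, add_mul, map_add, mul_assoc, C_mul', map_smul, smul_eq_mul]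

lemma natDegree_add_four_of_one_add_X_sq_sq_mul_eq (h : (1 + X ^ 2) ^ 2 * s = C g * r₀ + r₂)
    (hlt : r₀.natDegree < r₂.natDegree) : s.natDegree + 4 = r₂.natDegree := by
  have hrhs : (C g * r₀ + r₂).natDegree = r₂.natDegree :=
    natDegree_add_eq_right_of_natDegree_lt ((natDegree_C_mul_le _ _).trans_lt hlt)
  have hs : s ≠ 0 := by
    rintro rfl
    rw [mul_zero] at h
    rw [← h, natDegree_zero] at hrhs
    omega
  rw [← hrhs, ← h, monic_one_add_X_sq_sq.natDegree_mul' hs, natDegree_one_add_X_sq_sq, add_comm]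

lemma hasParity_natDegree_orthogonal_of_one_add_X_sq_sq_mul_eq (L₁ L₂ : ℝ[X] →ₗ[ℝ] ℝ)
    (hL : ∀ p, L₂ ((1 + X ^ 2) ^ 2 * p) = L₁ p) {R : ℕ → ℝ[X]}
    (hRpar : ∀ n, 1 ≤ n → HasParity (R n) n) (hRdeg : ∀ n, 1 ≤ n → (R n).natDegree = n + 2)
    (hRii : ∀ n, 1 ≤ n → L₂ (R n) = 0) (hRR : ∀ m k, 1 ≤ k → k < m → L₂ (R m * R k) = 0)
    {n : ℕ} (hn : 1 ≤ n) (h : (1 + X ^ 2) ^ 2 * s = C g * R n + R (n + 2)) :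
    HasParity s n ∧ s.natDegree = n ∧ L₁ s = 0 ∧ ∀ k, 1 ≤ k → k < n → L₁ (s * R k) = 0 := by
  have hmul := map_mul_eq_of_one_add_X_sq_sq_mul_eq h L₁ L₂ hL
  refine ⟨HasParity.of_one_add_X_sq_sq_mul (h ▸ ((hRpar n hn).C_mul g).add
      (hasParity_add_two.mp (hRpar (n + 2) (by omega)))), ?_, ?_, fun k hk hkn => ?_⟩
  · have := natDegree_add_four_of_one_add_X_sq_sq_mul_eq h
      (by rw [hRdeg n hn, hRdeg (n + 2) (by omega)]; omega)
    rw [hRdeg (n + 2) (by omega)] at this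
    omega
  · simpa [hRii n hn, hRii (n + 2) (by omega)] using hmul 1
  · rw [hmul, hRR n k hk hkn, hRR (n + 2) k hk (by omega)]
    ring

end DivisionByOneAddXSqSq

noncomputable def momentSequence (R : ℕ → ℝ[X]) : ℕ → ℝ[X]
  | k + 3 => R (k + 1)
  | k => X ^ k

lemma eq_zero_of_orthogonal_momentSequence (L : ℝ[X] →ₗ[ℝ] ℝ)
    (hpos : ∀ p, L (p * p) = 0 → p = 0) {R : ℕ → ℝ[X]}
    (hRdeg : ∀ n, 1 ≤ n → (R n).natDegree = n + 2) {s : ℝ[X]} {m : ℕ}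
    (hs : s.natDegree ≤ m + 1) (hX : ∀ j ≤ 2, L (s * X ^ j) = 0)
    (hR : ∀ k, 1 ≤ k → k < m → L (s * R k) = 0) : s = 0 := by
  have hdeg : ∀ i, (momentSequence R i).degree = i := fun i => by
    match i with
    | 0 | 1 | 2 => simp [momentSequence]
    | k + 3 =>
      have hk := hRdeg (k + 1) (by omega)
      rw [momentSequence, degree_eq_natDegree (ne_zero_of_natDegree_gt (n := 0) (by omega)), hk]
  refine hpos s ((Sequence.mk _ hdeg).map_eq_zero_of_degree_lt (L ∘ₗ LinearMap.mulLeft ℝ s)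
    (m := m + 2) (fun i hi => ?_) (degree_le_natDegree.trans_lt (by exact_mod_cast (by omega))))
  match i with
  | 0 => exact hX 0 (by norm_num)
  | 1 => exact hX 1 (by norm_num)
  | 2 => exact hX 2 le_rfl
  | k + 3 => exact hR (k + 1) (by omega) (by omega)

lemma map_X_pow_mul_ne_zero (L : ℝ[X] →ₗ[ℝ] ℝ)
    (hsymm : ∀ p n, HasParity p n → Odd n → L p = 0) (hpos : ∀ p, L (p * p) = 0 → p = 0)
    {R : ℕ → ℝ[X]} (hRdeg : ∀ n, 1 ≤ n → (R n).natDegree = n + 2) {s : ℝ[X]} {m : ℕ}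
    (hm : 1 ≤ m) (hpar : HasParity s m) (hdeg : s.natDegree = m) (h0 : L s = 0)
    (hR : ∀ k, 1 ≤ k → k < m → L (s * R k) = 0) :
    (Odd m → L (X * s) ≠ 0) ∧ (Even m → L (X ^ 2 * s) ≠ 0) := by
  have hs : s ≠ 0 := ne_zero_of_natDegree_gt (n := 0) (by omega)
  have hmoments : L (X * s) = 0 → L (X ^ 2 * s) = 0 → False := fun h1 h2 => by
    refine hs (eq_zero_of_orthogonal_momentSequence L hpos hRdeg (m := m) (by omega)
      (fun j hj => ?_) hR)
    interval_cases j
    · simpa using h0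
    · simpa [mul_comm] using h1
    · simpa [mul_comm] using h2
  exact ⟨fun hodd h1 =>
      hmoments h1 (hsymm _ _ ((hasParity_X_pow 2).mul hpar) (even_two.add_odd hodd)),
    fun heven h2 => hmoments (hsymm _ _ (hasParity_X.mul hpar) (odd_one.add_even heven)) h2⟩
lemma S_orthogonality (L₁ L₂ : ℝ[X] →ₗ[ℝ] ℝ) (hL : ∀ p, L₂ ((1 + X ^ 2) ^ 2 * p) = L₁ p)
    (hsymm : ∀ p n, HasParity p n → Odd n → L₁ p = 0) (hpos : ∀ p, L₁ (p * p) = 0 → p = 0)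
    {P R S : ℕ → ℝ[X]} {A B : ℕ → ℝ} (hPmonic : ∀ n, (P n).Monic)
    (hPdeg : ∀ n, (P n).natDegree = n) (hPorth : ∀ m n, m ≠ n → L₁ (P m * P n) = 0)
    (hPparity : ∀ n, HasParity (P n) n) (hR1 : R 1 = P 3 + C (A 1) * P 1)
    (hRn : ∀ n, 2 ≤ n → R n = P (n + 2) + C (A n) * P n + C (B n) * P (n - 2))
    (hRi : ∀ n, 1 ≤ n → devC (R n) Complex.I = 0) (hRii : ∀ n, 1 ≤ n → L₂ (R n) = 0)
    (hRiii : ∀ n, 2 ≤ n → L₂ (R 1 * R n) = 0) (hc : ∀ n, cconst R n ≠ 0)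
    (hS : ∀ n, C (cconst R n) * (1 + X ^ 2) ^ 2 * (S n).map (algebraMap ℝ ℂ) = Dpoly R n)
    {m : ℕ} (hm : 1 ≤ m) :
    HasParity (S m) m ∧ L₁ (S m) = 0 ∧ (∀ k, 1 ≤ k → k < m → L₁ (S m * R k) = 0) ∧
      (Odd m → L₁ (X * S m) ≠ 0) ∧ (Even m → L₁ (X ^ 2 * S m) ≠ 0) := by
  have hRpar : ∀ n, 1 ≤ n → HasParity (R n) n := fun _ => hasParity_R hR1 hRn hPparity
  have hRdeg : ∀ n, 1 ≤ n → (R n).natDegree = n + 2 := fun _ => natDegree_R hR1 hRn hPdeg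
  have hR1X : R 1 = X ^ 3 + C 3 * X := eq_X_pow_three_add_C_three_mul_X (hRpar 1 le_rfl)
    (monic_R hR1 hRn hPmonic hPdeg le_rfl) (hRdeg 1 le_rfl) (hRi 1 le_rfl)
  have hRR : ∀ m k, 1 ≤ k → k < m → L₂ (R m * R k) = 0 := fun _ _ =>
    map_R_mul_R_eq_zero L₁ L₂ hL hRdeg hR1X
      (fun _ hn _ => map_R_mul_eq_zero hRn L₁ (map_P_mul_eq_zero L₁ hPmonic hPdeg hPorth) hn)
      hRi hRii hRiii
  obtain ⟨g, hg⟩ :=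
    exists_one_add_X_sq_sq_mul_eq (hc m) (hS m) (hRpar m hm) (hRpar (m + 2) (by omega))
  obtain ⟨hpar, hdeg, h0, hR⟩ :=
    hasParity_natDegree_orthogonal_of_one_add_X_sq_sq_mul_eq L₁ L₂ hL hRpar hRdeg hRii hRR hm hg
  exact ⟨hpar, h0, hR, map_X_pow_mul_ne_zero L₁ hsymm hpos hRdeg hm hpar hdeg h0 hR⟩

lemma map_S_add_C_mul_S_eq_zero (L : ℝ[X] →ₗ[ℝ] ℝ)
    (hsymm : ∀ p n, HasParity p n → Odd n → L p = 0) {R S : ℕ → ℝ[X]} {ρ : ℕ → ℝ}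
    (hρ₀ : ∀ n ≤ 2, ρ n = 0)
    (hρ₁ : ∀ n, 3 ≤ n → Odd n → ρ n * L (X * S (n - 2)) = -L (X * S n))
    (hρ₂ : ∀ n, 4 ≤ n → Even n → ρ n * L (X ^ 2 * S (n - 2)) = -L (X ^ 2 * S n))
    (hpar : ∀ n, 1 ≤ n → HasParity (S n) n) (h0 : ∀ n, 1 ≤ n → L (S n) = 0)
    (hR : ∀ n k, 1 ≤ k → k < n → L (S n * R k) = 0) {n : ℕ} (hn : 1 ≤ n) :
    L (S n + C (ρ n) * S (n - 2)) = 0 ∧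
      (2 ≤ n → L (X * (S n + C (ρ n) * S (n - 2))) = 0) ∧
      (3 ≤ n → L (X ^ 2 * (S n + C (ρ n) * S (n - 2))) = 0) ∧
      (∀ k, 1 ≤ k → k ≤ n - 3 → L ((S n + C (ρ n) * S (n - 2)) * R k) = 0) := by
  have hsplit : ∀ p,
      L (p * (S n + C (ρ n) * S (n - 2))) = L (p * S n) + ρ n * L (p * S (n - 2)) := fun p => by
    rw [mul_add, C_mul', mul_smul_comm, map_add, map_smul, smul_eq_mul]
  have hX : ∀ m, 1 ≤ m → Even m → L (X * S m) = 0 := fun m hm he =>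
    hsymm _ _ (hasParity_X.mul (hpar m hm)) (odd_one.add_even he)
  have hX2 : ∀ m, 1 ≤ m → Odd m → L (X ^ 2 * S m) = 0 := fun m hm ho =>
    hsymm _ _ ((hasParity_X_pow 2).mul (hpar m hm)) (even_two.add_odd ho)
  rcases le_or_gt n 2 with hn2 | hn3
  · simp only [hρ₀ n hn2, map_zero, zero_mul, add_zero, h0 n hn, true_and]
    refine ⟨fun h2 => hX n hn ?_, by omega, by omega⟩
    rw [show n = 2 by omega]
    exact even_two
  have hn' : 1 ≤ n - 2 := by omega
  refine ⟨by simpa [h0 n hn, h0 (n - 2) hn'] using hsplit 1, fun _ => ?_, fun _ => ?_,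
    fun k hk1 hk => ?_⟩
  · rw [hsplit]
    rcases n.even_or_odd with he | ho
    · rw [hX n hn he, hX (n - 2) hn' (he.tsub even_two)]
      ring
    · rw [hρ₁ n hn3 ho]
      ring
  · rw [hsplit]
    rcases n.even_or_odd with he | ho
    · rw [hρ₂ n (by obtain ⟨k, rfl⟩ := he; omega) he]
      ring
    · rw [hX2 n hn ho, hX2 (n - 2) hn' (Nat.Odd.sub_even (by omega) ho even_two)]
      ring
  · rw [mul_comm, hsplit, mul_comm, hR n k hk1 (by omega), mul_comm (R k),
      hR (n - 2) k hk1 (by omega)]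
    ring

noncomputable def integralFunctional (μ : Measure ℝ) (w : ℝ → ℝ)
    (hw : ∀ p : ℝ[X], Integrable (fun x => p.eval x * w x) μ) : ℝ[X] →ₗ[ℝ] ℝ where
  toFun p := ∫ x, p.eval x * w x ∂μ
  map_add' p q := by simp only [eval_add, add_mul]; exact integral_add (hw p) (hw q)
  map_smul' c p := by simp [mul_assoc, integral_const_mul]

@[simp]
lemma integralFunctional_apply (μ : Measure ℝ) (w : ℝ → ℝ)
    (hw : ∀ p : ℝ[X], Integrable (fun x => p.eval x * w x) μ) (p : ℝ[X]) :
    integralFunctional μ w hw p = ∫ x, p.eval x * w x ∂μ := rfl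

lemma integrable_eval_mul_inv_one_add_sq_sq {μ : Measure ℝ}
    (hint : ∀ p : ℝ[X], Integrable (fun x => p.eval x) μ) (p : ℝ[X]) :
    Integrable (fun x => p.eval x * ((1 + x ^ 2) ^ 2)⁻¹) μ := by
  refine (hint p).mul_bdd (c := 1) (by fun_prop) (Filter.Eventually.of_forall fun x => ?_)
  rw [norm_inv, Real.norm_of_nonneg (by positivity)]
  exact inv_le_one_of_one_le₀ (one_le_pow₀ (by nlinarith [sq_nonneg x]))

lemma integral_eq_zero_of_hasParity {μ : Measure ℝ} (hsymm : μ.map (fun x => -x) = μ)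
    {p : ℝ[X]} {n : ℕ} (hp : HasParity p n) (hn : Odd n) : ∫ x, p.eval x ∂μ = 0 := by
  have h : ∫ x, p.eval x ∂μ = ∫ x, p.eval (-x) ∂μ := by
    conv_lhs => rw [← hsymm]
    exact integral_map_equiv (MeasurableEquiv.neg ℝ) _
  simp only [hp _, hn.neg_one_pow, neg_one_mul, integral_neg] at h
  linarith

lemma eq_zero_of_integral_mul_self_eq_zero {μ : Measure ℝ} (hsupp : (measSupport μ).Infinite)
    (hint : ∀ p : ℝ[X], Integrable (fun x => p.eval x) μ) {p : ℝ[X]}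
    (h : ∫ x, p.eval x * p.eval x ∂μ = 0) : p = 0 := by
  by_contra hp
  have hnull : μ (Function.support fun x => p.eval x * p.eval x) = 0 := by
    have hint' := hint (p * p)
    simp only [eval_mul] at hint'
    simpa [h] using (integral_pos_iff_support_of_nonneg (fun x => mul_self_nonneg _) hint').not
  have hopen : IsOpen (Function.support fun x => p.eval x * p.eval x) :=
    isOpen_ne_fun (by fun_prop) continuous_const
  refine hsupp ((p.finite_setOfPred_isRoot hp).subset fun x hx => ?_)
  by_contra hroot
  have := Measure.subset_compl_support_of_isOpen hopen hnull (by simpa using hroot)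
  exact this ((Measure.mem_support_iff_forall x).mpr fun U hU => pos_iff_ne_zero.mpr (hx U hU))

lemma rho_of_le_two (μ : Measure ℝ) (S : ℕ → ℝ[X]) {n : ℕ} (hn : n ≤ 2) : rho μ S n = 0 := by
  simp [rho, hn]

lemma rho_mul_of_odd {μ : Measure ℝ} {S : ℕ → ℝ[X]} {n : ℕ} (hn : 3 ≤ n) (hodd : Odd n)
    (hden : ∫ x, x * (S (n - 2)).eval x ∂μ ≠ 0) :
    rho μ S n * ∫ x, x * (S (n - 2)).eval x ∂μ = -∫ x, x * (S n).eval x ∂μ := by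
  rw [rho, if_neg (by omega), if_pos hodd, div_mul_cancel₀ _ hden]

lemma rho_mul_of_even {μ : Measure ℝ} {S : ℕ → ℝ[X]} {n : ℕ} (hn : 4 ≤ n) (heven : Even n)
    (hden : ∫ x, x ^ 2 * (S (n - 2)).eval x ∂μ ≠ 0) :
    rho μ S n * ∫ x, x ^ 2 * (S (n - 2)).eval x ∂μ = -∫ x, x ^ 2 * (S n).eval x ∂μ := by
  rw [rho, if_neg (by omega), if_neg (Nat.not_odd_iff_even.mpr heven), div_mul_cancel₀ _ hden]
theorem stmt_8_general
    (μ : Measure ℝ)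
    (hsymm : μ.map (fun x => -x) = μ)
    (hsupp : (measSupport μ).Infinite)
    (hint : ∀ p : Polynomial ℝ, Integrable (fun x => p.eval x) μ)
    (P : ℕ → Polynomial ℝ)
    (hPmonic : ∀ n, (P n).Monic)
    (hPdeg : ∀ n, (P n).natDegree = n)
    (hPorth : ∀ m n, m ≠ n → ∫ x, (P m).eval x * (P n).eval x ∂μ = 0)
    (hPparity : ∀ n x, (P n).eval (-x) = (-1 : ℝ)^n * (P n).eval x)
    (A B : ℕ → ℝ) (R : ℕ → Polynomial ℝ)
    (hR1 : R 1 = P 3 + Polynomial.C (A 1) * P 1)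
    (hRn : ∀ n, 2 ≤ n →
      R n = P (n+2) + Polynomial.C (A n) * P n + Polynomial.C (B n) * P (n-2))
    (hRi : ∀ n, 1 ≤ n → devC (R n) Complex.I = 0)
    (hRii : ∀ n, 1 ≤ n → ∫ x, (R n).eval x / (1+x^2)^2 ∂μ = 0)
    (hRiii : ∀ n, 2 ≤ n → ∫ x, (R 1).eval x * (R n).eval x / (1+x^2)^2 ∂μ = 0)
    (S : ℕ → Polynomial ℝ)
    (hc : ∀ n, cconst R n ≠ 0)
    (hS : ∀ n, Polynomial.C (cconst R n) * ((1 + Polynomial.X^2)^2)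
            * ((S n).map (algebraMap ℝ ℂ)) = Dpoly R n)
    :
    (∀ n : ℕ, 3 ≤ n → Odd n → ∫ x, x * (S (n-2)).eval x ∂μ ≠ 0) ∧
    (∀ n : ℕ, 4 ≤ n → Even n → ∫ x, x^2 * (S (n-2)).eval x ∂μ ≠ 0) ∧
    (∀ n : ℕ, 1 ≤ n →
      (∫ x, (S n + Polynomial.C (rho μ S n) * S (n-2)).eval x ∂μ = 0) ∧
      (2 ≤ n → ∫ x, x * (S n + Polynomial.C (rho μ S n) * S (n-2)).eval x ∂μ = 0) ∧
      (3 ≤ n → ∫ x, x^2 * (S n + Polynomial.C (rho μ S n) * S (n-2)).eval x ∂μ = 0) ∧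
      (∀ k : ℕ, 1 ≤ k → k ≤ n - 3 →
        ∫ x, (S n + Polynomial.C (rho μ S n) * S (n-2)).eval x * (R k).eval x ∂μ = 0)) := by
  set L₁ := integralFunctional μ (fun _ => 1) (by simpa using hint)
  set L₂ := integralFunctional μ (fun x => ((1 + x ^ 2) ^ 2)⁻¹)
    (integrable_eval_mul_inv_one_add_sq_sq hint)
  have hL : ∀ p, L₂ ((1 + X ^ 2) ^ 2 * p) = L₁ p := fun p => by
    simp only [L₁, L₂, integralFunctional_apply, eval_mul, eval_pow, eval_add, eval_one, eval_X,
      mul_one]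
    congr 1 with x
    field_simp
  have hsymm' : ∀ p n, HasParity p n → Odd n → L₁ p = 0 := fun p n hp hn => by
    simpa [L₁] using integral_eq_zero_of_hasParity hsymm hp hn
  have hS' := fun m (hm : 1 ≤ m) => S_orthogonality L₁ L₂ hL hsymm'
    (fun p hp => eq_zero_of_integral_mul_self_eq_zero hsupp hint (by simpa [L₁] using hp))
    hPmonic hPdeg (fun m n h => by simpa [L₁] using hPorth m n h) hPparity hR1 hRn hRi
    (fun n hn => by simpa [L₂, div_eq_mul_inv] using hRii n hn)
    (fun n hn => by simpa [L₂, div_eq_mul_inv] using hRiii n hn) hc hS hm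
  have hodd : ∀ n, 3 ≤ n → Odd n → ∫ x, x * (S (n - 2)).eval x ∂μ ≠ 0 := fun n hn hodd => by
    simpa [L₁, mul_comm] using
      (hS' (n - 2) (by omega)).2.2.2.1 (Nat.Odd.sub_even (by omega) hodd even_two)
  have heven : ∀ n, 4 ≤ n → Even n → ∫ x, x ^ 2 * (S (n - 2)).eval x ∂μ ≠ 0 :=
    fun n hn heven => by
      simpa [L₁, mul_comm] using (hS' (n - 2) (by omega)).2.2.2.2 (heven.tsub even_two)
  refine ⟨hodd, heven, fun n hn => ?_⟩
  simpa [L₁] using map_S_add_C_mul_S_eq_zero L₁ hsymm' (ρ := rho μ S) (fun n => rho_of_le_two μ S)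
    (fun n hn ho => by simpa [L₁] using rho_mul_of_odd hn ho (hodd n hn ho))
    (fun n hn he => by simpa [L₁] using rho_mul_of_even hn he (heven n hn he))
    (fun m hm => (hS' m hm).1) (fun m hm => (hS' m hm).2.1)
    (fun m k hk hkm => (hS' m (by omega)).2.2.1 k hk hkm) hn

/-- Theorem 4.5: the denominators defining ρ_n are nonzero, and the
monic polynomial 𝒫_n = S_n + ρ_n S_{n-2} is orthogonal to 1, x, x²,
R_1, …, R_{n-3} with respect to μ. -/
theorem stmt_8
    (μ : Measure ℝ)
    (hsymm : μ.map (fun x => -x) = μ)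
    (hsupp : (measSupport μ).Infinite)
    (hint : ∀ p : Polynomial ℝ, Integrable (fun x => p.eval x) μ)
    (P : ℕ → Polynomial ℝ)
    (hPmonic : ∀ n, (P n).Monic)
    (hPdeg : ∀ n, (P n).natDegree = n)
    (hPorth : ∀ m n, m ≠ n → ∫ x, (P m).eval x * (P n).eval x ∂μ = 0)
    (hPparity : ∀ n x, (P n).eval (-x) = (-1 : ℝ)^n * (P n).eval x)
    (A B : ℕ → ℝ) (R : ℕ → Polynomial ℝ)
    (hR0 : R 0 = 1)
    (hR1 : R 1 = P 3 + Polynomial.C (A 1) * P 1)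
    (hRn : ∀ n, 2 ≤ n →
      R n = P (n+2) + Polynomial.C (A n) * P n + Polynomial.C (B n) * P (n-2))
    (hRi : ∀ n, 1 ≤ n → devC (R n) Complex.I = 0)
    (hRii : ∀ n, 1 ≤ n → ∫ x, (R n).eval x / (1+x^2)^2 ∂μ = 0)
    (hRiii : ∀ n, 2 ≤ n → ∫ x, (R 1).eval x * (R n).eval x / (1+x^2)^2 ∂μ = 0)
    (S : ℕ → Polynomial ℝ)
    (hc : ∀ n, cconst R n ≠ 0)
    (hS : ∀ n, Polynomial.C (cconst R n) * ((1 + Polynomial.X^2)^2)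
            * ((S n).map (algebraMap ℝ ℂ)) = Dpoly R n)
    :
    (∀ n : ℕ, 3 ≤ n → Odd n → ∫ x, x * (S (n-2)).eval x ∂μ ≠ 0) ∧
    (∀ n : ℕ, 4 ≤ n → Even n → ∫ x, x^2 * (S (n-2)).eval x ∂μ ≠ 0) ∧
    (∀ n : ℕ, 1 ≤ n →
      (∫ x, (S n + Polynomial.C (rho μ S n) * S (n-2)).eval x ∂μ = 0) ∧
      (2 ≤ n → ∫ x, x * (S n + Polynomial.C (rho μ S n) * S (n-2)).eval x ∂μ = 0) ∧
      (3 ≤ n → ∫ x, x^2 * (S n + Polynomial.C (rho μ S n) * S (n-2)).eval x ∂μ = 0) ∧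
      (∀ k : ℕ, 1 ≤ k → k ≤ n - 3 →
        ∫ x, (S n + Polynomial.C (rho μ S n) * S (n-2)).eval x * (R k).eval x ∂μ = 0)) :=
  stmt_8_general μ hsymm hsupp hint P hPmonic hPdeg hPorth hPparity A B R hR1 hRn hRi hRii hRiii S
    hc hS
end

section
/- Orthogonality of the DEK polynomials: define F_0 := 1 and, for n ≥ 1, F_n := He_{n+2} + 2(n+2) He_n + (n+2)(n−1) He_{n−2} (with He_{−1} := 0). Then for all nonnegative integers n ≠ m, ∫_{−∞}^{∞} F_n(x) F_m(x) e^{−x²/2} (1+x²)^{−2} dx = 0. -/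
open MeasureTheory Polynomial

/-- The monic (probabilists') Hermite polynomials over ℝ. -/
noncomputable def He (n : ℕ) : Polynomial ℝ :=
  (Polynomial.hermite n).map (Int.castRingHom ℝ)

/-- The DEK polynomials: F_0 = 1 and, for n ≥ 1,
F_n = He_{n+2} + 2(n+2) He_n + (n+2)(n-1) He_{n-2}. -/
noncomputable def DEK (n : ℕ) : Polynomial ℝ :=
  if n = 0 then 1
  else He (n+2) + Polynomial.C (2 * ((n : ℝ) + 2)) * He n
        + Polynomial.C (((n : ℝ) + 2) * ((n : ℝ) - 1)) * He (n-2)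

theorem derivative_hermite_succ (n : ℕ) :
    derivative (hermite (n+1)) = (n+1 : ℤ) * hermite n := by
  induction n with
  | zero => simp [hermite_one, hermite_zero]
  | succ n ih =>
    rw [hermite_succ (n+1), derivative_sub, derivative_mul, derivative_X, ih]
    rw [derivative_mul]
    simp only [derivative_intCast, zero_mul, zero_add]
    rw [hermite_succ n]
    push_cast
    ring

theorem He_succ (n : ℕ) : He (n+1) = X * He n - derivative (He n) := by
  unfold He
  rw [hermite_succ, Polynomial.map_sub, Polynomial.map_mul, map_X, derivative_map]

theorem derivative_He_succ (n : ℕ) :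
    derivative (He (n+1)) = ((n : Polynomial ℝ)+1) * He n := by
  unfold He
  rw [derivative_map, derivative_hermite_succ, Polynomial.map_mul, Polynomial.map_intCast]
  push_cast
  ring

theorem He_ode (n : ℕ) :
    derivative (derivative (He n)) = X * derivative (He n) - (n : Polynomial ℝ) * He n := by
  induction n with
  | zero => simp [He, hermite_zero]
  | succ n ih =>
    rw [derivative_He_succ, He_succ n]
    push_cast
    simp only [derivative_add, derivative_mul, derivative_natCast, derivative_one, zero_mul,
      zero_add]
    ring

/-- The eigenvalue of the DEK polynomial. -/
noncomputable def lam (n : ℕ) : ℝ := if n = 0 then 0 else -((n : ℝ) + 2)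

theorem dek_ode (n : ℕ) :
    (1 + X^2) * derivative (derivative (DEK n)) - (X^3 + 5*X) * derivative (DEK n)
      = C (lam n) * ((1 + X^2) * DEK n) := by
  match n with
  | 0 => simp [DEK, lam]
  | 1 =>
    have h0 : He 0 = 1 := by simp [He, hermite_zero]
    have h1 : He 1 = X := by rw [He_succ, h0]; simp
    have h2 : He 2 = X^2 - 1 := by rw [He_succ, h1]; simp; ring
    have h3 : He 3 = X^3 - 3*X := by
      rw [He_succ, h2]
      simp only [derivative_sub, derivative_X_pow, derivative_one, C_eq_natCast]
      push_cast
      ring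
    unfold DEK lam
    norm_num [h0, h1, h3, map_ofNat]
    ring
  | (k+2) =>
    have hne : k + 2 ≠ 0 := by omega
    have r0 : X * He k = He (k+1) + derivative (He k) := by rw [He_succ]; ring
    have r1 : X * He (k+1) = He (k+2) + ((k : Polynomial ℝ)+1) * He k := by
      have := He_succ (k+1); rw [derivative_He_succ] at this
      rw [show k+1+1 = k+2 from rfl] at this
      rw [this]; ring
    have r2 : X * He (k+2) = He (k+3) + ((k : Polynomial ℝ)+2) * He (k+1) := by
      have := He_succ (k+2); rw [derivative_He_succ] at this
      rw [show k+2+1 = k+3 from rfl] at this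
      rw [this]; push_cast; ring
    have r3 : X * He (k+3) = He (k+4) + ((k : Polynomial ℝ)+3) * He (k+2) := by
      have := He_succ (k+3); rw [derivative_He_succ] at this
      rw [show k+3+1 = k+4 from rfl] at this
      rw [this]; push_cast; ring
    have d4 : derivative (He (k+4)) = ((k : Polynomial ℝ)+4) * He (k+3) := by
      have := derivative_He_succ (k+3)
      rw [show k+3+1 = k+4 from rfl] at this
      rw [this]; push_cast; ring
    have d2 : derivative (He (k+2)) = ((k : Polynomial ℝ)+2) * He (k+1) := by
      have := derivative_He_succ (k+1)
      rw [show k+1+1 = k+2 from rfl] at this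
      rw [this]; push_cast; ring
    have d3 : derivative (He (k+3)) = ((k : Polynomial ℝ)+3) * He (k+2) := by
      have := derivative_He_succ (k+2)
      rw [show k+2+1 = k+3 from rfl] at this
      rw [this]; push_cast; ring
    have d1 : derivative (He (k+1)) = ((k : Polynomial ℝ)+1) * He k := by
      rw [derivative_He_succ]
    have dd0 := He_ode k
    unfold DEK lam
    rw [if_neg hne, if_neg hne]
    rw [show k+2+2 = k+4 from rfl, show k+2-2 = k from rfl]
    simp only [derivative_add, derivative_mul, derivative_C, zero_mul, zero_add]
    rw [d4, d2, dd0]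
    simp only [derivative_add, derivative_mul, derivative_natCast, derivative_ofNat,
      derivative_one, zero_mul, zero_add, derivative_X, derivative_sub]
    rw [d3, d1]
    simp only [C_mul, C_add, C_sub, C_neg, C_1, map_ofNat, C_eq_natCast]
    push_cast
    linear_combination (-((k:Polynomial ℝ)+4)*X^2 - ((k:Polynomial ℝ)+4)) * r3
      + (4*(k:Polynomial ℝ)+16)*X * r2
      + (-(2*(k:Polynomial ℝ)^2+12*(k:Polynomial ℝ)+16)*X^2 - (2*(k:Polynomial ℝ)^2+16*(k:Polynomial ℝ)+32)) * r1
      + (4*(k:Polynomial ℝ)^2+20*(k:Polynomial ℝ)+16)*X * r0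

theorem lam_injective {n m : ℕ} (h : n ≠ m) : lam n ≠ lam m := by
  unfold lam
  intro hq
  split_ifs at hq with h1 h2 h2
  · exact h (h1.trans h2.symm)
  · have : (0:ℝ) < (m:ℝ) + 2 := by positivity
    linarith [hq]
  · have : (0:ℝ) < (n:ℝ) + 2 := by positivity
    linarith [hq]
  · have : (n:ℝ) = m := by linarith [hq]
    exact h (by exact_mod_cast this)

theorem integrable_pow_gauss (n : ℕ) :
    Integrable fun x : ℝ => x ^ n * Real.exp (-x^2/2) := by
  have h := integrable_rpow_mul_exp_neg_mul_sq (b := 2⁻¹) (by norm_num)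
    (s := (n:ℝ)) (lt_of_lt_of_le (by norm_num) (Nat.cast_nonneg n))
  simp only [Real.rpow_natCast] at h
  have : ∀ x : ℝ, -2⁻¹ * x^2 = -x^2/2 := fun x => by ring
  simpa only [this] using h

theorem integrable_poly_gauss (p : Polynomial ℝ) :
    Integrable fun x : ℝ => p.eval x * Real.exp (-x^2/2) := by
  induction p using Polynomial.induction_on' with
  | add p q hp hq => simpa only [eval_add, add_mul] using hp.fun_add hq
  | monomial n a =>
    have := (integrable_pow_gauss n).const_mul a
    simpa only [eval_monomial, mul_assoc] using this

theorem integrable_poly_gauss_weight (p : Polynomial ℝ) :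
    Integrable fun x : ℝ => p.eval x * Real.exp (-x^2/2) / (1+x^2)^2 := by
  refine (integrable_poly_gauss p).norm.mono' ?_ ?_
  · apply Continuous.aestronglyMeasurable
    apply Continuous.div
    · exact (p.continuous_aeval.mul (Real.continuous_exp.comp (by continuity)))
    · continuity
    · intro x; positivity
  · filter_upwards with x
    have h1 : (1:ℝ) ≤ (1+x^2)^2 := by nlinarith [sq_nonneg x, sq_nonneg (x^2)]
    rw [Real.norm_eq_abs, Real.norm_eq_abs, abs_div]
    exact div_le_self (abs_nonneg _)
      (by rw [abs_of_nonneg (by positivity : (0:ℝ) ≤ (1+x^2)^2)]; exact h1)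

/-- orthogonality (1.3) of the paper: the DEK polynomials are
orthogonal with respect to e^{-x²/2}(1+x²)^{-2} dx on ℝ. -/
theorem stmt_17 :
    ∀ n m : ℕ, n ≠ m →
      ∫ x : ℝ, (DEK n).eval x * (DEK m).eval x * Real.exp (-x^2/2) / (1 + x^2)^2 = 0 := by
  intro n m hnm
  set P : Polynomial ℝ := derivative (DEK n) * DEK m - DEK n * derivative (DEK m) with hP
  set c : ℝ := lam n - lam m with hc
  have hcne : c ≠ 0 := sub_ne_zero.mpr (lam_injective hnm)
  -- the integrand, and the function whose derivative it (up to `c`) is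
  set g : ℝ → ℝ := fun x => P.eval x * Real.exp (-x^2/2) / (1+x^2)^2 with hg
  set f : ℝ → ℝ := fun x => c * ((DEK n).eval x * (DEK m).eval x * Real.exp (-x^2/2) / (1 + x^2)^2)
    with hf
  have key : ∀ x : ℝ, HasDerivAt g (f x) x := by
    intro x
    have hu : (0:ℝ) < 1 + x^2 := by positivity
    have hu2 : ((1:ℝ)+x^2)^2 ≠ 0 := by positivity
    have hPd : HasDerivAt (fun y : ℝ => P.eval y) (P.derivative.eval x) x := P.hasDerivAt x
    have hexp : HasDerivAt (fun y : ℝ => Real.exp (-y^2/2)) (-x * Real.exp (-x^2/2)) x := by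
      have h1 : HasDerivAt (fun y : ℝ => -y^2/2) (-x) x := by
        have := ((hasDerivAt_pow 2 x).neg.div_const 2)
        norm_num at this
        exact this.congr_deriv (by ring)
      have := h1.exp
      convert this using 1
      ring
    have hden : HasDerivAt (fun y : ℝ => (1+y^2)^2) (2 * (1+x^2) * (2*x)) x := by
      have h1 : HasDerivAt (fun y : ℝ => 1 + y^2) (2*x) x := by
        simpa using ((hasDerivAt_pow 2 x).const_add 1)
      have := h1.fun_pow 2
      simpa [mul_comm, mul_assoc, mul_left_comm] using this
    have hD := (hPd.fun_mul hexp).fun_div hden hu2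
    refine hD.congr_deriv (Eq.symm ?_)
    -- now prove the identity of the derivative values
    have hn := congrArg (eval x) (dek_ode n)
    have hm := congrArg (eval x) (dek_ode m)
    simp only [eval_mul, eval_add, eval_sub, eval_pow, eval_X, eval_one, eval_C,
      eval_ofNat] at hn hm
    have hPd2 : P.derivative
        = derivative (derivative (DEK n)) * DEK m - DEK n * derivative (derivative (DEK m)) := by
      rw [hP]
      simp only [derivative_sub, derivative_mul]
      ring
    rw [hf, hPd2, hP]
    simp only [eval_sub, eval_mul, eval_add]
    set a : ℝ := eval x (DEK n)
    set a1 : ℝ := eval x (derivative (DEK n))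
    set a2 : ℝ := eval x (derivative (derivative (DEK n)))
    set b : ℝ := eval x (DEK m)
    set b1 : ℝ := eval x (derivative (DEK m))
    set b2 : ℝ := eval x (derivative (derivative (DEK m)))
    set E : ℝ := Real.exp (-x^2/2)
    have hkey : (1+x^2) * (a2*b - a*b2) - (x^3+5*x)*(a1*b - a*b1)
        = c * ((1+x^2)*(a*b)) := by
      rw [hc]
      linear_combination b * hn - a * hm
    have hune : (1:ℝ) + x^2 ≠ 0 := ne_of_gt hu
    rw [← mul_div_assoc, div_eq_div_iff (by positivity) (by positivity)]
    linear_combination (-(E * (1+x^2)^3)) * hkey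
  have hgint : Integrable g := integrable_poly_gauss_weight P
  have hfint : Integrable f := by
    have := (integrable_poly_gauss_weight (DEK n * DEK m)).const_mul c
    simpa only [hf, eval_mul] using this
  have h0 : ∫ x : ℝ, f x = 0 := integral_eq_zero_of_hasDerivAt_of_integrable key hfint hgint
  rw [hf, integral_const_mul] at h0
  exact (mul_eq_zero.mp h0).resolve_left hcne
end
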